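/- Let n, d be positive integers with n > d and let A be an n × n matrix with entries in {0,1} such that every row of A has exactly d ones and every column of A has exactly d ones. Let Γ_A be the simple graph on the column indices of A in which two distinct columns j, k are adjacent if and only if the number of rows i with A_{i,j} = A_{i,k} = 1 equals d − 1. Assume Γ_A is connected. Then for every set S of column indices with 0 < |S| ≤ d such that the subgraph of Γ_A induced by S is connected, the number of rows i with A_{i,j} = 1 for all j ∈ S equals d − |S| + 1. -/

import Mathlib

open Finset

/-- The graph `Γ_A` on the column indices of a 0/1-matrix `A` (encoded with `Bool` entries):
two distinct columns `j, k` are adjacent iff the number of rows `i` with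
`A i j = A i k = 1` equals `d - 1`. -/
def gammaA (n d : ℕ) (A : Fin n → Fin n → Bool) : SimpleGraph (Fin n) where
  Adj j k := j ≠ k ∧ (univ.filter (fun i => A i j ∧ A i k)).card = d - 1
  symm := ⟨by
    rintro j k ⟨hjk, hcard⟩
    refine ⟨hjk.symm, ?_⟩
    rw [← hcard]
    congr 1
    ext i
    simp [and_comm]⟩
  loopless := ⟨fun j h => h.1 rfl⟩

/-!
Write `c(P)` for the number of rows having a `1` in every column of `P`. If `j ∈ P` is adjacent
to `k` in `Γ_A`, then column `j` has exactly one `1` outside the support of column `k`, so adding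
`k` to `P` loses at most one common row. Growing a single column (where `c = d`) to `S` along edges
of the induced subgraph gives `c(S) ≥ d - |S| + 1`; growing `S` along edges of `Γ_A` to `d + 1`
columns, which no row of weight `d` can cover, gives `c(S) ≤ d + 1 - |S|`.
-/

lemma SimpleGraph.Preconnected.exists_adj_of_mem_of_notMem {V : Type*} {G : SimpleGraph V}
    (hG : G.Preconnected) {P : Set V} {a b : V} (ha : a ∈ P) (hb : b ∉ P) :
    ∃ j ∈ P, ∃ k ∉ P, G.Adj j k := by
  obtain ⟨w⟩ := hG a b
  obtain ⟨e, -, hj, hk⟩ := w.exists_boundary_dart P ha hb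
  exact ⟨e.fst, hj, e.snd, hk, e.adj⟩

section CommonRows

variable {ι κ : Type*} [Fintype ι] (A : ι → κ → Bool)

def commonRows (P : Finset κ) : Finset ι := univ.filter fun i => ∀ j ∈ P, A i j

lemma card_commonRows_singleton (j : κ) :
    #(commonRows A {j}) = #(univ.filter fun i => A i j) := by
  simp [commonRows]

lemma commonRows_eq_empty [Fintype κ] {T : Finset κ}
    (hT : ∀ i, #(univ.filter fun j => A i j) < #T) : commonRows A T = ∅ := by
  refine eq_empty_of_forall_notMem fun i hi => ?_
  have hTi : T ⊆ univ.filter fun j => A i j := fun j hj => by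
    simp only [commonRows, mem_filter, mem_univ, true_and] at hi
    simpa using hi j hj
  exact (card_le_card hTi).not_gt (hT i)

variable [DecidableEq κ]

lemma card_commonRows_le_insert {P : Finset κ} {j k : κ} (hj : j ∈ P)
    (hjk : #(univ.filter fun i => A i j ∧ ¬ A i k) ≤ 1) :
    #(commonRows A P) ≤ #(commonRows A (insert k P)) + 1 := by
  classical
  have hsub : commonRows A P ⊆
      commonRows A (insert k P) ∪ univ.filter fun i => A i j ∧ ¬ A i k := by
    intro i hi
    simp only [commonRows, mem_filter, mem_univ, true_and, mem_union, mem_insert,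
      forall_eq_or_imp] at hi ⊢
    by_cases hk : A i k
    · exact Or.inl ⟨hk, hi⟩
    · exact Or.inr ⟨hi j hj, hk⟩
  calc #(commonRows A P) ≤ _ := card_le_card hsub
    _ ≤ _ := card_union_le _ _
    _ ≤ _ := by omega

variable {A}

lemma exists_superset_card_commonRows_le {G : SimpleGraph κ}
    (hG : ∀ j k, G.Adj j k → #(univ.filter fun i => A i j ∧ ¬ A i k) ≤ 1)
    {s : Finset κ} (hs : (G.induce (s : Set κ)).Preconnected) (m : ℕ) :
    ∀ P : Finset κ, P ⊆ s → P.Nonempty → #P + m ≤ #s →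
      ∃ Q, P ⊆ Q ∧ Q ⊆ s ∧ #Q = #P + m ∧
        #(commonRows A P) ≤ #(commonRows A Q) + m := by
  induction m with
  | zero => exact fun P hPs _ _ => ⟨P, Subset.rfl, hPs, rfl, by omega⟩
  | succ m ih =>
    intro P hPs ⟨a, ha⟩ hcard
    obtain ⟨b, hbs, hbP⟩ := exists_of_ssubset (hPs.ssubset_of_ne (by rintro rfl; omega))
    obtain ⟨j, hj, k, hk, hjk⟩ := hs.exists_adj_of_mem_of_notMem
      (P := {v : (s : Set κ) | (v : κ) ∈ P}) (a := ⟨a, hPs ha⟩) (b := ⟨b, hbs⟩) ha hbP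
    have hstep := card_commonRows_le_insert A hj (hG j k hjk)
    obtain ⟨Q, hPQ, hQs, hQ, hle⟩ := ih (insert (k : κ) P) (insert_subset (mem_coe.mp k.2) hPs)
      (insert_nonempty _ _) (by rw [card_insert_of_notMem hk]; omega)
    rw [card_insert_of_notMem hk] at hQ
    exact ⟨Q, (subset_insert _ _).trans hPQ, hQs, by omega, by omega⟩

end CommonRows

lemma card_filter_and_not_le_one_of_gammaA_adj {n d : ℕ} {A : Fin n → Fin n → Bool}
    (hcol : ∀ j, #(univ.filter fun i => A i j) = d) :
    ∀ j k, (gammaA n d A).Adj j k → #(univ.filter fun i => A i j ∧ ¬ A i k) ≤ 1 := by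
  intro j k hjk
  have hsplit := card_filter_add_card_filter_not (s := univ.filter fun i => A i j)
    (p := fun i => A i k)
  rw [filter_filter, filter_filter, hcol j, hjk.2] at hsplit
  omega

theorem stmt3_general (n d : ℕ) (hnd : d < n)
    (A : Fin n → Fin n → Bool)
    (hrow : ∀ i : Fin n, (univ.filter (fun j => A i j)).card = d)
    (hcol : ∀ j : Fin n, (univ.filter (fun i => A i j)).card = d)
    (hconn : (gammaA n d A).Connected) :
    ∀ S : Finset (Fin n), 0 < S.card → S.card ≤ d →
      ((gammaA n d A).induce (S : Set (Fin n))).Connected →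
      (univ.filter (fun i => ∀ j ∈ S, A i j)).card = d - S.card + 1 := by
  intro S hS hSd hSconn
  have hG := card_filter_and_not_le_one_of_gammaA_adj hcol
  obtain ⟨r, hr⟩ := card_pos.mp hS
  -- The goal's filter is decided by `Nat.decidableForallFin`, not syntactically `commonRows A S`.
  suffices #(commonRows A S) = d - #S + 1 by unfold commonRows at this; convert this
  have lower : d ≤ #(commonRows A S) + (#S - 1) := by
    obtain ⟨Q, -, hQS, hQ, hle⟩ := exists_superset_card_commonRows_le hG hSconn.preconnected
      (#S - 1) {r} (singleton_subset_iff.mpr hr) (singleton_nonempty r)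
      (by rw [card_singleton]; omega)
    rwa [eq_of_subset_of_card_le hQS (by rw [hQ, card_singleton]; omega),
      card_commonRows_singleton, hcol] at hle
  have upper : #(commonRows A S) ≤ d + 1 - #S := by
    have huniv : ((gammaA n d A).induce ((univ : Finset (Fin n)) : Set (Fin n))).Preconnected := by
      rw [coe_univ]
      exact (SimpleGraph.induceUnivIso _).preconnected_iff.mpr hconn.preconnected
    obtain ⟨T, -, -, hT, hle⟩ := exists_superset_card_commonRows_le hG huniv
      (d + 1 - #S) S (subset_univ S) ⟨r, hr⟩ (by rw [card_univ, Fintype.card_fin]; omega)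
    rwa [commonRows_eq_empty A (T := T) (fun i => by rw [hrow i]; omega), card_empty,
      zero_add] at hle
  omega

/-- If every row and every column of an `n × n` 0/1-matrix `A` has exactly `d` ones,
`n > d`, and `Γ_A` is connected, then for every set `S` of columns with `0 < |S| ≤ d`
inducing a connected subgraph of `Γ_A`, the number of rows having ones in all columns
of `S` equals `d - |S| + 1`. -/
theorem stmt3 (n d : ℕ) (hn : 0 < n) (hd : 0 < d) (hnd : d < n)
    (A : Fin n → Fin n → Bool)
    (hrow : ∀ i : Fin n, (univ.filter (fun j => A i j)).card = d)
    (hcol : ∀ j : Fin n, (univ.filter (fun i => A i j)).card = d)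
    (hconn : (gammaA n d A).Connected) :
    ∀ S : Finset (Fin n), 0 < S.card → S.card ≤ d →
      ((gammaA n d A).induce (S : Set (Fin n))).Connected →
      (univ.filter (fun i => ∀ j ∈ S, A i j)).card = d - S.card + 1 :=
  stmt3_general n d hnd A hrow hcol hconn
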